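/- For all n ≥ 0, all coefficient sequences a, b, and all m ≥ 0, the n-th ψ-derivative of the Ward product satisfies the general ψ-Leibniz rule (Dⁿ(a·b))ₘ = Σ_{k=0}^{n} Σ_{l=0}^{m} C(n,k)(m,l) · binomψ(m,l) · (D^{n−k}a)_l · (D^{k}b)_{m−l}. -/

import Mathlib

/-!
Write `K ⋆ (f, g)` for the Ward product weighted by a kernel `K`, with `m`-th coefficient
`∑ₗ K(m,l) binomψ(m,l) f_l g_{m-l}`. The ψ-Pascal rule
`binomψ(m+1,l+1) = binomψ(m,l) + F(m+1,l+1) binomψ(m,l+1)` yields the product rule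
`D (K ⋆ (f, g)) = K⁺ ⋆ (D f, g) + (F·K) ⋆ (f, D g)` with `K⁺(m,l) = K(m+1,l+1)` and
`(F·K)(m,l) = F(m+1,l) K(m+1,l)`. The recursion defining `C(n,k)` is exactly the Pascal-type
recursion that makes `∑ₖ C(n,k) ⋆ (D^{n-k} a, D^k b)` stable under this rule, so the theorem
follows by induction on `n` as the classical Leibniz rule does.
-/

open Finset

/-- The ψ-factorial: ψₙ! = ψ₁ψ₂⋯ψₙ, with ψ₀! = 1. -/
noncomputable def psiFact (ψ : ℕ → ℂ) : ℕ → ℂ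
  | 0 => 1
  | n + 1 => psiFact ψ n * ψ (n + 1)

/-- The ψ-binomial coefficient binomψ(n,k) = ψₙ!/(ψₖ!·ψ_{n−k}!). -/
noncomputable def psiBinom (ψ : ℕ → ℂ) (n k : ℕ) : ℂ :=
  psiFact ψ n / (psiFact ψ k * psiFact ψ (n - k))

/-- The Fontané numbers F(n,k) = (ψₙ − ψₖ)/ψ_{n−k}. -/
noncomputable def Fker (ψ : ℕ → ℂ) (n k : ℕ) : ℂ :=
  (ψ n - ψ k) / ψ (n - k)

/-- The Ward product of coefficient sequences. -/
noncomputable def wardMul (ψ : ℕ → ℂ) (a b : ℕ → ℂ) (n : ℕ) : ℂ :=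
  ∑ k ∈ Finset.range (n + 1), psiBinom ψ n k * a k * b (n - k)

/-- The ψ-derivative on coefficient sequences: the shift (D a)ₙ = a_{n+1}. -/
def Dpsi (a : ℕ → ℂ) (n : ℕ) : ℂ := a (n + 1)

/-- The binomial-operator kernels C(n,k)(m,l) of the binomial operators ⟨n k⟩∗. -/
noncomputable def Cker (ψ : ℕ → ℂ) : ℕ → ℕ → ℕ → ℕ → ℂ
  | _, 0, _, _ => 1
  | 0, _ + 1, _, _ => 0
  | n + 1, k + 1, m, l =>
      if k = n then ∏ i ∈ Finset.range (n + 1), Fker ψ (m + i + 1) l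
      else Cker ψ n (k + 1) (m + 1) (l + 1) + Fker ψ (m + 1) l * Cker ψ n k (m + 1) l

section PsiCalculus

variable {ψ : ℕ → ℂ}

theorem psiFact_ne_zero (hψ : ∀ n : ℕ, 1 ≤ n → ψ n ≠ 0) : ∀ n, psiFact ψ n ≠ 0
  | 0 => one_ne_zero
  | n + 1 => mul_ne_zero (psiFact_ne_zero hψ n) (hψ (n + 1) n.succ_pos)

theorem psiBinom_zero_right (hψ : ∀ n : ℕ, 1 ≤ n → ψ n ≠ 0) (m : ℕ) : psiBinom ψ m 0 = 1 := by
  simp [psiBinom, psiFact, psiFact_ne_zero hψ]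

theorem psiBinom_self (hψ : ∀ n : ℕ, 1 ≤ n → ψ n ≠ 0) (m : ℕ) : psiBinom ψ m m = 1 := by
  simp [psiBinom, psiFact, psiFact_ne_zero hψ]

theorem Fker_self (j : ℕ) : Fker ψ j j = 0 := by
  simp [Fker]

theorem Fker_succ_zero (hψ0 : ψ 0 = 0) (hψ : ∀ n : ℕ, 1 ≤ n → ψ n ≠ 0) (m : ℕ) :
    Fker ψ (m + 1) 0 = 1 := by
  simp [Fker, hψ0, hψ (m + 1) m.succ_pos]

theorem psiBinom_succ_succ (hψ : ∀ n : ℕ, 1 ≤ n → ψ n ≠ 0) {m l : ℕ} (hl : l ≤ m) :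
    psiBinom ψ (m + 1) (l + 1)
      = psiBinom ψ m l + Fker ψ (m + 1) (l + 1) * psiBinom ψ m (l + 1) := by
  obtain rfl | hlt := hl.eq_or_lt
  · simp [psiBinom_self hψ, Fker_self]
  obtain ⟨j, rfl⟩ : ∃ j, m = l + (j + 1) := ⟨m - l - 1, by omega⟩
  have hl' := psiFact_ne_zero hψ l
  have hj := psiFact_ne_zero hψ j
  have hψl := hψ (l + 1) (by omega)
  have hψj := hψ (j + 1) (by omega)
  simp only [psiBinom, Fker, show l + (j + 1) + 1 - (l + 1) = j + 1 by omega,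
    show l + (j + 1) - l = j + 1 by omega, show l + (j + 1) - (l + 1) = j by omega, psiFact]
  field_simp
  ring

theorem Cker_zero (n m l : ℕ) : Cker ψ n 0 m l = 1 := by
  cases n <;> rfl

theorem Cker_of_lt {n k : ℕ} (h : n < k) (m l : ℕ) : Cker ψ n k m l = 0 := by
  induction n generalizing k m l with
  | zero => obtain ⟨k, rfl⟩ := Nat.exists_eq_succ_of_ne_zero h.ne'; rfl
  | succ n ih =>
    obtain ⟨k, rfl⟩ := Nat.exists_eq_succ_of_ne_zero (Nat.ne_zero_of_lt h)
    rw [Cker, if_neg (by omega), ih (by omega), ih (by omega), mul_zero, add_zero]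

/-- The defining recursion of `Cker` also holds on the diagonal `k = n`, where it peels one factor
off the product, and for `k > n`, where both sides vanish. -/
theorem Cker_succ_succ (n k m l : ℕ) :
    Cker ψ (n + 1) (k + 1) m l
      = Cker ψ n (k + 1) (m + 1) (l + 1) + Fker ψ (m + 1) l * Cker ψ n k (m + 1) l := by
  rcases lt_trichotomy k n with hk | rfl | hk
  · rw [Cker, if_neg hk.ne]
  · rw [Cker_of_lt k.lt_succ_self, zero_add, Cker, if_pos rfl]
    cases k with
    | zero => simp [Cker_zero]
    | succ k =>
      rw [Cker, if_pos rfl, prod_range_succ']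
      simp only [add_assoc, add_comm 1, mul_comm]
  · rw [Cker_of_lt (by omega), Cker_of_lt (by omega), Cker_of_lt hk, mul_zero, add_zero]

end PsiCalculus

section KernelWardMul

variable (ψ : ℕ → ℂ)

/-- The binomial operator `⟨n k⟩∗` of the paper is `kernelWardMul ψ (Cker ψ n k)`. -/
noncomputable def kernelWardMul (K : ℕ → ℕ → ℂ) (f g : ℕ → ℂ) (m : ℕ) : ℂ :=
  ∑ l ∈ range (m + 1), K m l * psiBinom ψ m l * f l * g (m - l)

theorem kernelWardMul_one (f g : ℕ → ℂ) : kernelWardMul ψ (fun _ _ => 1) f g = wardMul ψ f g := by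
  funext m
  simp only [kernelWardMul, wardMul, one_mul]

theorem kernelWardMul_zero (f g : ℕ → ℂ) : kernelWardMul ψ (fun _ _ => 0) f g = 0 := by
  funext m
  simp [kernelWardMul]

theorem kernelWardMul_add (K₁ K₂ : ℕ → ℕ → ℂ) (f g : ℕ → ℂ) :
    kernelWardMul ψ (fun m l => K₁ m l + K₂ m l) f g
      = kernelWardMul ψ K₁ f g + kernelWardMul ψ K₂ f g := by
  funext m
  simp only [kernelWardMul, Pi.add_apply, ← sum_add_distrib, add_mul]

variable {ψ}

theorem Dpsi_sum {ι : Type*} (s : Finset ι) (f : ι → ℕ → ℂ) :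
    Dpsi (∑ i ∈ s, f i) = ∑ i ∈ s, Dpsi (f i) := by
  funext m
  simp only [Dpsi, Finset.sum_apply]

/-- The product rule: by ψ-Pascal's rule each term of the `(m + 1)`-st coefficient splits into one
where `f` absorbs the shift and one, weighted by `F(m + 1, l)`, where `g` does. -/
theorem Dpsi_kernelWardMul (hψ0 : ψ 0 = 0) (hψ : ∀ n : ℕ, 1 ≤ n → ψ n ≠ 0)
    (K : ℕ → ℕ → ℂ) (f g : ℕ → ℂ) :
    Dpsi (kernelWardMul ψ K f g)
      = kernelWardMul ψ (fun m l => K (m + 1) (l + 1)) (Dpsi f) g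
        + kernelWardMul ψ (fun m l => Fker ψ (m + 1) l * K (m + 1) l) f (Dpsi g) := by
  funext m
  simp only [Pi.add_apply, Dpsi, kernelWardMul]
  have hpascal : ∀ l ∈ range (m + 1),
      K (m + 1) (l + 1) * psiBinom ψ (m + 1) (l + 1) * f (l + 1) * g (m + 1 - (l + 1))
        = K (m + 1) (l + 1) * psiBinom ψ m l * f (l + 1) * g (m - l)
          + Fker ψ (m + 1) (l + 1) * K (m + 1) (l + 1) * psiBinom ψ m (l + 1) * f (l + 1)
            * g (m - l) := by
    intro l hl
    rw [psiBinom_succ_succ hψ (Nat.lt_succ_iff.mp (mem_range.mp hl)), Nat.add_sub_add_right]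
    ring
  have hshift : ∑ l ∈ range (m + 1), Fker ψ (m + 1) l * K (m + 1) l * psiBinom ψ m l * f l
        * g (m - l + 1)
      = ∑ l ∈ range (m + 1), Fker ψ (m + 1) (l + 1) * K (m + 1) (l + 1) * psiBinom ψ m (l + 1)
          * f (l + 1) * g (m - l) + K (m + 1) 0 * f 0 * g (m + 1) := by
    rw [sum_range_succ', sum_range_succ _ m, Fker_self, Fker_succ_zero hψ0 hψ,
      psiBinom_zero_right hψ, Nat.sub_zero]
    have hsub : ∀ l ∈ range m, m - (l + 1) + 1 = m - l := fun l hl => by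
      have := mem_range.mp hl; omega
    rw [sum_congr rfl fun l hl => by rw [hsub l hl]]
    ring
  rw [sum_range_succ', sum_congr rfl hpascal, sum_add_distrib, hshift, psiBinom_zero_right hψ,
    Nat.sub_zero]
  ring

end KernelWardMul

theorem sum_antidiagonal_shift {M : Type*} [AddCommMonoid M] {n : ℕ} {f : ℕ × ℕ → M}
    (hf : f (n + 1, 0) = 0) :
    ∑ p ∈ antidiagonal n, f (p.1, p.2 + 1)
      = f (0, n + 1) + ∑ p ∈ antidiagonal n, f (p.1 + 1, p.2) := by
  rw [← Nat.sum_antidiagonal_succ, Nat.sum_antidiagonal_succ', hf, zero_add]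

theorem iterate_Dpsi_wardMul {ψ : ℕ → ℂ} (hψ0 : ψ 0 = 0) (hψ : ∀ n : ℕ, 1 ≤ n → ψ n ≠ 0)
    (a b : ℕ → ℂ) (n : ℕ) :
    Dpsi^[n] (wardMul ψ a b)
      = ∑ p ∈ antidiagonal n, kernelWardMul ψ (Cker ψ n p.1) (Dpsi^[p.2] a) (Dpsi^[p.1] b) := by
  induction n with
  | zero =>
    have hC : Cker ψ 0 0 = fun _ _ => 1 := rfl
    simp [hC, kernelWardMul_one]
  | succ n ih =>
    have hvanish : kernelWardMul ψ (fun m l => Cker ψ n (n + 1) (m + 1) (l + 1))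
        (Dpsi^[0] a) (Dpsi^[n + 1] b) = 0 := by
      simp only [Cker_of_lt n.lt_succ_self, kernelWardMul_zero]
    have hshift := sum_antidiagonal_shift (f := fun p => kernelWardMul ψ
      (fun m l => Cker ψ n p.1 (m + 1) (l + 1)) (Dpsi^[p.2] a) (Dpsi^[p.1] b)) hvanish
    have hC : ∀ k, Cker ψ (n + 1) (k + 1)
        = fun m l => Cker ψ n (k + 1) (m + 1) (l + 1) + Fker ψ (m + 1) l * Cker ψ n k (m + 1) l :=
      fun k => funext₂ (Cker_succ_succ n k)
    have h0 : Cker ψ (n + 1) 0 = fun m l => Cker ψ n 0 (m + 1) (l + 1) := by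
      funext m l; simp only [Cker_zero]
    rw [Function.iterate_succ_apply', ih, Dpsi_sum, Nat.sum_antidiagonal_succ]
    simp only [Dpsi_kernelWardMul hψ0 hψ, sum_add_distrib, hC, kernelWardMul_add]
    simp only [← Function.iterate_succ_apply' Dpsi]
    rw [hshift, h0, add_assoc]

theorem general_psi_leibniz_general (ψ : ℕ → ℂ) (hψ0 : ψ 0 = 0) (hψ : ∀ n : ℕ, 1 ≤ n → ψ n ≠ 0)
    (n : ℕ) (a b : ℕ → ℂ) (m : ℕ) :
    (Dpsi^[n] (wardMul ψ a b)) m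
      = ∑ k ∈ Finset.range (n + 1), ∑ l ∈ Finset.range (m + 1),
          Cker ψ n k m l * psiBinom ψ m l * (Dpsi^[n - k] a) l * (Dpsi^[k] b) (m - l) := by
  rw [iterate_Dpsi_wardMul hψ0 hψ, Finset.sum_apply, Nat.sum_antidiagonal_eq_sum_range_succ
    (fun k j => kernelWardMul ψ (Cker ψ n k) (Dpsi^[j] a) (Dpsi^[k] b) m)]
  rfl

/-- Leibniz's general ψ-rule: the n-th ψ-derivative of the Ward product expands via
the binomial-operator kernels C(n,k). -/
theorem general_psi_leibniz (ψ : ℕ → ℂ) (hψ0 : ψ 0 = 0) (hψ1 : ψ 1 = 1) (hψ : ∀ n : ℕ, 1 ≤ n → ψ n ≠ 0)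
    (n : ℕ) (a b : ℕ → ℂ) (m : ℕ) :
    (Dpsi^[n] (wardMul ψ a b)) m
      = ∑ k ∈ Finset.range (n + 1), ∑ l ∈ Finset.range (m + 1),
          Cker ψ n k m l * psiBinom ψ m l * (Dpsi^[n - k] a) l * (Dpsi^[k] b) (m - l) :=
  general_psi_leibniz_general ψ hψ0 hψ n a b m
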